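/- arXiv:2110.01388 — 3 statements merged into one kernel-verified Lean document; each statement's English description precedes it below -/
import Mathlib

section
/- Consider the closed-loop dynamics x⁺ = A x + B π(Cᵀ x + ν) + c + ω. Let X ⊆ ℝ^{n_x}, and suppose Ψ, Φ ∈ ℝ^{n_u×n_y} and α, β ∈ ℝ^{n_u} satisfy Φ y + β ≤ π(y) ≤ Ψ y + α componentwise for every y = Cᵀ x + ν with x ∈ X and ν̲ ≤ ν ≤ ν̄. Fix a ∈ ℝ^{n_x} and set b := Bᵀ a ∈ ℝ^{n_u}. Define Υ ∈ ℝ^{n_u×n_y} and Γ ∈ ℝ^{n_u} row-wise by (Υ_{j,:}, Γ_j) = (Ψ_{j,:}, α_j) if b_j ≥ 0 and (Υ_{j,:}, Γ_j) = (Φ_{j,:}, β_j) otherwise. Define M := (A + B Υ Cᵀ)ᵀ a ∈ ℝ^{n_x} and n := ∑_j b_j Γ_j + ∑_{j,m} ((b_j Υ_{j,m})⁺ ν̄_m + (b_j Υ_{j,m})⁻ ν̲_m) + aᵀ c + ∑_k (a_k⁺ ω̄_k + a_k⁻ ω̲_k). Then for every x ∈ X, every ν with ν̲ ≤ ν ≤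 ν̄, and every ω with ω̲ ≤ ω ≤ ω̄, one has aᵀ(A x + B π(Cᵀ x + ν) + c + ω) ≤ Mᵀ x + n. -/
open Matrix

/-- One-step bound for a neural feedback loop: given affine relaxations
`Φy + β ≤ π(y) ≤ Ψy + α` of the NN controller valid on the relevant
measurements, the linear functional `aᵀx⁺` of the next state
`x⁺ = Ax + Bπ(Cᵀx + ν) + c + ω` is bounded by the affine function
`Mᵀx + n` built from the sign-dependent selection `Υ, Γ`. -/
theorem nfl_one_step_affine_bound
    {nx nu ny : ℕ}
    (A : Matrix (Fin nx) (Fin nx) ℝ) (B : Matrix (Fin nx) (Fin nu) ℝ)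
    (C : Matrix (Fin nx) (Fin ny) ℝ) (c : Fin nx → ℝ)
    (π : (Fin ny → ℝ) → Fin nu → ℝ)
    (X : Set (Fin nx → ℝ))
    (Ψ Φ : Matrix (Fin nu) (Fin ny) ℝ) (α β : Fin nu → ℝ)
    (νlo νhi : Fin ny → ℝ) (ωlo ωhi : Fin nx → ℝ)
    (hrelax : ∀ x ∈ X, ∀ ν : Fin ny → ℝ, (∀ m, νlo m ≤ ν m ∧ ν m ≤ νhi m) →
      ∀ j, (Φ.mulVec (C.transpose.mulVec x + ν)) j + β j
              ≤ π (C.transpose.mulVec x + ν) j ∧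
            π (C.transpose.mulVec x + ν) j
              ≤ (Ψ.mulVec (C.transpose.mulVec x + ν)) j + α j)
    (a : Fin nx → ℝ)
    (b : Fin nu → ℝ) (hb : b = B.transpose.mulVec a)
    (Υ : Matrix (Fin nu) (Fin ny) ℝ) (Γ : Fin nu → ℝ)
    (hΥ : ∀ j, Υ j = if 0 ≤ b j then Ψ j else Φ j)
    (hΓ : ∀ j, Γ j = if 0 ≤ b j then α j else β j)
    (M : Fin nx → ℝ) (hM : M = (A + B * Υ * C.transpose).transpose.mulVec a)
    (nconst : ℝ)
    (hn : nconst = (∑ j, b j * Γ j)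
        + (∑ j, ∑ m, (max (b j * Υ j m) 0 * νhi m + min (b j * Υ j m) 0 * νlo m))
        + (∑ k, a k * c k)
        + (∑ k, (max (a k) 0 * ωhi k + min (a k) 0 * ωlo k))) :
    ∀ x ∈ X, ∀ ν : Fin ny → ℝ, (∀ m, νlo m ≤ ν m ∧ ν m ≤ νhi m) →
      ∀ ω : Fin nx → ℝ, (∀ k, ωlo k ≤ ω k ∧ ω k ≤ ωhi k) →
        (∑ k, a k * (A.mulVec x + B.mulVec (π (C.transpose.mulVec x + ν)) + c + ω) k)
          ≤ (∑ k, M k * x k) + nconst := by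

  intro x hx ν hν ω hω
  have hwm : ∀ (r lo t hi : ℝ), lo ≤ t → t ≤ hi →
      r * t ≤ max r 0 * hi + min r 0 * lo := by
    intro r lo t hi h1 h2
    rcases le_total 0 r with hr | hr
    · rw [max_eq_left hr, min_eq_right hr]
      have := mul_le_mul_of_nonneg_left h2 hr
      linarith
    · rw [max_eq_right hr, min_eq_left hr]
      have := mul_le_mul_of_nonpos_left h1 hr
      linarith
  set y := C.transpose.mulVec x + ν with hy
  -- bound on π
  have hπ : ∀ j, b j * π y j ≤ b j * (Υ.mulVec y) j + b j * Γ j := by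
    intro j
    have hrel := hrelax x hx ν hν j
    by_cases hbj : 0 ≤ b j
    · have hU : (Υ.mulVec y) j = (Ψ.mulVec y) j := by
        simp [Matrix.mulVec, hΥ j, hbj]
      have hG : Γ j = α j := by simp [hΓ j, hbj]
      rw [hU, hG, ← mul_add]
      exact mul_le_mul_of_nonneg_left hrel.2 hbj
    · have hbj' : b j ≤ 0 := le_of_not_ge hbj
      have hU : (Υ.mulVec y) j = (Φ.mulVec y) j := by
        simp [Matrix.mulVec, hΥ j, hbj]
      have hG : Γ j = β j := by simp [hΓ j, hbj]
      rw [hU, hG, ← mul_add]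
      exact mul_le_mul_of_nonpos_left hrel.1 hbj'
  -- a ⬝ᵥ B.mulVec p = ∑ j, b j * p j
  have hab : ∀ (p : Fin nu → ℝ), a ⬝ᵥ B.mulVec p = ∑ j, b j * p j := by
    intro p
    rw [Matrix.dotProduct_mulVec, hb, Matrix.mulVec_transpose]
    rfl
  -- LHS decomposition
  have hL : (∑ k, a k * (A.mulVec x + B.mulVec (π y) + c + ω) k)
      = a ⬝ᵥ A.mulVec x + (∑ j, b j * π y j)
        + (∑ k, a k * c k) + (∑ k, a k * ω k) := by
    rw [← hab (π y)]
    simp [dotProduct, mul_add, Finset.sum_add_distrib]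
  -- M side
  have hMx : (∑ k, M k * x k)
      = a ⬝ᵥ A.mulVec x + ∑ j, b j * (Υ.mulVec (C.transpose.mulVec x)) j := by
    have h1 : (∑ k, M k * x k) = M ⬝ᵥ x := rfl
    rw [h1, hM, Matrix.mulVec_transpose, ← Matrix.dotProduct_mulVec,
      Matrix.add_mulVec, dotProduct_add, ← Matrix.mulVec_mulVec,
      ← Matrix.mulVec_mulVec, hab]
  -- split Υ.mulVec y
  have hsplit : ∀ j, b j * (Υ.mulVec y) j
      = b j * (Υ.mulVec (C.transpose.mulVec x)) j + ∑ m, (b j * Υ j m) * ν m := by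
    intro j
    rw [hy, Matrix.mulVec_add, Pi.add_apply, mul_add]
    congr 1
    rw [Matrix.mulVec, dotProduct, Finset.mul_sum]
    simp [mul_assoc]
  -- bound the noise term
  have hnoise : (∑ j, ∑ m, (b j * Υ j m) * ν m)
      ≤ ∑ j, ∑ m, (max (b j * Υ j m) 0 * νhi m + min (b j * Υ j m) 0 * νlo m) := by
    refine Finset.sum_le_sum fun j _ => Finset.sum_le_sum fun m _ => ?_
    exact hwm _ _ _ _ (hν m).1 (hν m).2
  have hω' : (∑ k, a k * ω k)
      ≤ ∑ k, (max (a k) 0 * ωhi k + min (a k) 0 * ωlo k) := by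
    refine Finset.sum_le_sum fun k _ => ?_
    exact hwm _ _ _ _ (hω k).1 (hω k).2
  have hsum1 : (∑ j, b j * π y j)
      ≤ (∑ j, b j * (Υ.mulVec (C.transpose.mulVec x)) j)
        + (∑ j, ∑ m, (b j * Υ j m) * ν m) + (∑ j, b j * Γ j) := by
    have h2 : (∑ j, b j * π y j) ≤ ∑ j, (b j * (Υ.mulVec y) j + b j * Γ j) :=
      Finset.sum_le_sum fun j _ => hπ j
    calc (∑ j, b j * π y j)
        ≤ ∑ j, (b j * (Υ.mulVec y) j + b j * Γ j) := h2
      _ = (∑ j, b j * (Υ.mulVec (C.transpose.mulVec x)) j)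
          + (∑ j, ∑ m, (b j * Υ j m) * ν m) + (∑ j, b j * Γ j) := by
          rw [Finset.sum_add_distrib]
          have h3 : (∑ j, b j * (Υ.mulVec y) j)
              = (∑ j, b j * (Υ.mulVec (C.transpose.mulVec x)) j)
                + (∑ j, ∑ m, (b j * Υ j m) * ν m) := by
            rw [← Finset.sum_add_distrib]
            exact Finset.sum_congr rfl fun j _ => hsplit j
          rw [h3]
  rw [hL, hMx, hn]
  linarith
end

section
/- Let m, n be positive integers, Λ ∈ ℝ^{m×n}, l, u ∈ ℝⁿ with l_j ≤ u_j for all j, and let σ : ℝⁿ → ℝⁿ act coordinatewise, σ(z)_j = σ_j(z_j). Suppose there exist a^U, c^U, a^L, c^L ∈ ℝⁿ such that for every j and every t ∈ [l_j, u_j]: a^L_j·t + c^L_j ≤ σ_j(t) ≤ a^U_j·t + c^U_j. Then for every z ∈ ℝⁿ with l ≤ z ≤ u componentwise and every i ∈ {1, …, m}: (Λ σ(z))_i ≤ ∑_j (Λ_{ij}⁺ a^U_j + Λ_{ij}⁻ a^L_j)·z_j + ∑_j (Λ_{ij}⁺ c^U_j + Λ_{ij}⁻ c^L_j), and (Λ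 σ(z))_i ≥ ∑_j (Λ_{ij}⁺ a^L_j + Λ_{ij}⁻ a^U_j)·z_j + ∑_j (Λ_{ij}⁺ c^L_j + Λ_{ij}⁻ c^U_j). In particular, the upper and lower bounds are affine functions of z. -/
/-- Backward-substitution step of linear-relaxation-based NN analysis (CROWN):
given scalar affine bounds on each coordinatewise activation valid on its
pre-activation interval, a linear functional `(Λ σ(z))_i` of the activation
outputs is bounded above and below by affine functions of `z`. -/
theorem crown_backward_substitution
    (m n : ℕ) (hm : 0 < m) (hn : 0 < n)
    (Λ : Matrix (Fin m) (Fin n) ℝ)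
    (l u : Fin n → ℝ) (hlu : ∀ j, l j ≤ u j)
    (σ : Fin n → ℝ → ℝ)
    (aU cU aL cL : Fin n → ℝ)
    (hσ : ∀ j, ∀ t : ℝ, l j ≤ t → t ≤ u j →
      aL j * t + cL j ≤ σ j t ∧ σ j t ≤ aU j * t + cU j) :
    ∀ z : Fin n → ℝ, (∀ j, l j ≤ z j ∧ z j ≤ u j) → ∀ i : Fin m,
      (∑ j, Λ i j * σ j (z j))
          ≤ (∑ j, (max (Λ i j) 0 * aU j + min (Λ i j) 0 * aL j) * z j)
            + (∑ j, (max (Λ i j) 0 * cU j + min (Λ i j) 0 * cL j)) ∧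
      (∑ j, (max (Λ i j) 0 * aL j + min (Λ i j) 0 * aU j) * z j)
          + (∑ j, (max (Λ i j) 0 * cL j + min (Λ i j) 0 * cU j))
        ≤ (∑ j, Λ i j * σ j (z j)) := by
  intro z hz i
  rw [← Finset.sum_add_distrib, ← Finset.sum_add_distrib]
  constructor
  · apply Finset.sum_le_sum
    intro j _
    obtain ⟨hL, hU⟩ := hσ j (z j) (hz j).1 (hz j).2
    have h1 : max (Λ i j) 0 * σ j (z j) ≤ max (Λ i j) 0 * (aU j * z j + cU j) :=
      mul_le_mul_of_nonneg_left hU (le_max_right _ _)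
    have h2 : min (Λ i j) 0 * σ j (z j) ≤ min (Λ i j) 0 * (aL j * z j + cL j) :=
      mul_le_mul_of_nonpos_left hL (min_le_right _ _)
    calc Λ i j * σ j (z j)
        = max (Λ i j) 0 * σ j (z j) + min (Λ i j) 0 * σ j (z j) := by
          rw [← add_mul, max_add_min, add_zero]
      _ ≤ max (Λ i j) 0 * (aU j * z j + cU j) + min (Λ i j) 0 * (aL j * z j + cL j) :=
          add_le_add h1 h2
      _ = (max (Λ i j) 0 * aU j + min (Λ i j) 0 * aL j) * z j
            + (max (Λ i j) 0 * cU j + min (Λ i j) 0 * cL j) := by ring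
  · apply Finset.sum_le_sum
    intro j _
    obtain ⟨hL, hU⟩ := hσ j (z j) (hz j).1 (hz j).2
    have h1 : max (Λ i j) 0 * (aL j * z j + cL j) ≤ max (Λ i j) 0 * σ j (z j) :=
      mul_le_mul_of_nonneg_left hL (le_max_right _ _)
    have h2 : min (Λ i j) 0 * (aU j * z j + cU j) ≤ min (Λ i j) 0 * σ j (z j) :=
      mul_le_mul_of_nonpos_left hU (min_le_right _ _)
    calc (max (Λ i j) 0 * aL j + min (Λ i j) 0 * aU j) * z j
            + (max (Λ i j) 0 * cL j + min (Λ i j) 0 * cU j)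
        = max (Λ i j) 0 * (aL j * z j + cL j) + min (Λ i j) 0 * (aU j * z j + cU j) := by ring
      _ ≤ max (Λ i j) 0 * σ j (z j) + min (Λ i j) 0 * σ j (z j) := add_le_add h1 h2
      _ = Λ i j * σ j (z j) := by rw [← add_mul, max_add_min, add_zero]
end

section
/- Let f : ℝ^{n₀} → ℝ^{n₂} be a one-hidden-layer network f(x) = W² σ(W¹ x + b¹) + b², where W¹ ∈ ℝ^{n₁×n₀}, b¹ ∈ ℝ^{n₁}, W² ∈ ℝ^{n₂×n₁}, b² ∈ ℝ^{n₂}, and σ : ℝ^{n₁} → ℝ^{n₁} acts coordinatewise. Let S ⊆ ℝ^{n₀} and l, u ∈ ℝ^{n₁} be such that l ≤ W¹x + b¹ ≤ u componentwise for all x ∈ S, and suppose a^U, c^U, a^L, c^L ∈ ℝ^{n₁} satisfy a^L_j·t + c^L_j ≤ σ_j(t) ≤ a^U_j·t + c^U_j for every j and every t ∈ [l_j, u_j]. Define Ψ ∈ ℝ^{n₂×n₀} by Ψ_{i,:} = ∑_j (W²_{ij}⁺ a^U_j + W²_{ij}⁻ a^L_j)·W¹_{j,:} and α ∈ ℝ^{n₂}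 by α_i = ∑_j (W²_{ij}⁺ (a^U_j b¹_j + c^U_j) + W²_{ij}⁻ (a^L_j b¹_j + c^L_j)) + b²_i; define Φ and β analogously with the roles of (a^U, c^U) and (a^L, c^L) exchanged. Then for every x ∈ S and every i: Φ_{i,:} x + β_i ≤ f_i(x) ≤ Ψ_{i,:} x + α_i. -/
/-!
Split each outer weight as `w = max w 0 + min w 0`. On the positive part an upper (lower)
linear relaxation of the activation gives an upper (lower) bound, on the negative part the
roles swap. Since the pre-activation `W¹x + b¹` is affine in `x`, substituting it into the
relaxations yields affine bounds in `x`, whose coefficients are exactly `Ψ, α` and `Φ, β`.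
-/

open Finset Matrix

theorem mul_le_max_mul_add_min_mul {w s lo hi : ℝ} (hlo : lo ≤ s) (hhi : s ≤ hi) :
    w * s ≤ max w 0 * hi + min w 0 * lo :=
  calc w * s = max w 0 * s + min w 0 * s := by rw [← add_mul, max_add_min, add_zero]
    _ ≤ max w 0 * hi + min w 0 * lo :=
      add_le_add (mul_le_mul_of_nonneg_left hhi (le_max_right w 0))
        (mul_le_mul_of_nonpos_left hlo (min_le_right w 0))

theorem max_mul_add_min_mul_le_mul {w s lo hi : ℝ} (hlo : lo ≤ s) (hhi : s ≤ hi) :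
    max w 0 * lo + min w 0 * hi ≤ w * s :=
  calc max w 0 * lo + min w 0 * hi ≤ max w 0 * s + min w 0 * s :=
      add_le_add (mul_le_mul_of_nonneg_left hlo (le_max_right w 0))
        (mul_le_mul_of_nonpos_left hhi (min_le_right w 0))
    _ = w * s := by rw [← add_mul, max_add_min, add_zero]

theorem sum_sum_mul_mul_eq_sum_mul_sum {ι κ : Type*} [Fintype ι] [Fintype κ]
    (d : ι → ℝ) (W : Matrix ι κ ℝ) (x : κ → ℝ) :
    ∑ k, (∑ j, d j * W j k) * x k = ∑ j, d j * ∑ k, W j k * x k := by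
  simpa [dotProduct, vecMul, mulVec] using (dotProduct_mulVec d W x).symm

theorem sum_relaxation_comp_affine {ι κ : Type*} [Fintype ι] [Fintype κ]
    (W : Matrix ι κ ℝ) (b : ι → ℝ) (x : κ → ℝ) (p m a c a' c' : ι → ℝ) :
    ∑ k, (∑ j, (p j * a j + m j * a' j) * W j k) * x k
        + ∑ j, (p j * (a j * b j + c j) + m j * (a' j * b j + c' j))
      = ∑ j, (p j * (a j * (∑ k, W j k * x k + b j) + c j)
          + m j * (a' j * (∑ k, W j k * x k + b j) + c' j)) := by
  rw [sum_sum_mul_mul_eq_sum_mul_sum, ← sum_add_distrib]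
  exact sum_congr rfl fun j _ => by ring

/-- Convex relaxation of a one-hidden-layer network: affine output bounds
`Φx + β ≤ f(x) ≤ Ψx + α` valid on the input set `S`, constructed from the
weights, biases, and linear relaxations of the activations. -/
theorem one_hidden_layer_affine_bounds
    {n₀ n₁ n₂ : ℕ}
    (W1 : Matrix (Fin n₁) (Fin n₀) ℝ) (b1 : Fin n₁ → ℝ)
    (W2 : Matrix (Fin n₂) (Fin n₁) ℝ) (b2 : Fin n₂ → ℝ)
    (σ : Fin n₁ → ℝ → ℝ)
    (f : (Fin n₀ → ℝ) → Fin n₂ → ℝ)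
    (hf : ∀ x i, f x i = (∑ j, W2 i j * σ j ((∑ k, W1 j k * x k) + b1 j)) + b2 i)
    (S : Set (Fin n₀ → ℝ)) (l u : Fin n₁ → ℝ)
    (hpre : ∀ x ∈ S, ∀ j, l j ≤ (∑ k, W1 j k * x k) + b1 j ∧
      (∑ k, W1 j k * x k) + b1 j ≤ u j)
    (aU cU aL cL : Fin n₁ → ℝ)
    (hσ : ∀ j, ∀ t : ℝ, l j ≤ t → t ≤ u j →
      aL j * t + cL j ≤ σ j t ∧ σ j t ≤ aU j * t + cU j)
    (Ψ Φ : Matrix (Fin n₂) (Fin n₀) ℝ) (α β : Fin n₂ → ℝ)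
    (hΨ : ∀ i k, Ψ i k = ∑ j, (max (W2 i j) 0 * aU j + min (W2 i j) 0 * aL j) * W1 j k)
    (hα : ∀ i, α i = (∑ j, (max (W2 i j) 0 * (aU j * b1 j + cU j)
        + min (W2 i j) 0 * (aL j * b1 j + cL j))) + b2 i)
    (hΦ : ∀ i k, Φ i k = ∑ j, (max (W2 i j) 0 * aL j + min (W2 i j) 0 * aU j) * W1 j k)
    (hβ : ∀ i, β i = (∑ j, (max (W2 i j) 0 * (aL j * b1 j + cL j)
        + min (W2 i j) 0 * (aU j * b1 j + cU j))) + b2 i) :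
    ∀ x ∈ S, ∀ i : Fin n₂,
      (∑ k, Φ i k * x k) + β i ≤ f x i ∧ f x i ≤ (∑ k, Ψ i k * x k) + α i := by
  intro x hx i
  have hrelax j := hσ j _ (hpre x hx j).1 (hpre x hx j).2
  constructor
  · calc (∑ k, Φ i k * x k) + β i
        = ∑ j, (max (W2 i j) 0 * (aL j * (∑ k, W1 j k * x k + b1 j) + cL j)
            + min (W2 i j) 0 * (aU j * (∑ k, W1 j k * x k + b1 j) + cU j)) + b2 i := by
          simp only [hΦ, hβ, ← add_assoc, sum_relaxation_comp_affine]
      _ ≤ f x i := by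
          rw [hf]
          gcongr with j
          exact max_mul_add_min_mul_le_mul (hrelax j).1 (hrelax j).2
  · calc f x i
        ≤ ∑ j, (max (W2 i j) 0 * (aU j * (∑ k, W1 j k * x k + b1 j) + cU j)
            + min (W2 i j) 0 * (aL j * (∑ k, W1 j k * x k + b1 j) + cL j)) + b2 i := by
          rw [hf]
          gcongr with j
          exact mul_le_max_mul_add_min_mul (hrelax j).1 (hrelax j).2
      _ = (∑ k, Ψ i k * x k) + α i := by
          simp only [hΨ, hα, ← add_assoc, sum_relaxation_comp_affine]
end
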